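/- arXiv:2101.10088 — 2 statements merged into one kernel-verified Lean document; each statement's English description precedes it below -/
import Mathlib

section
/- If κ is an uncountable cardinal with cofinality ω, then cf([κ]^{ℵ₀}, ⊆) > κ. -/
/-!
Suppose `D` is a cofinal family of countable subsets of `A`, `|D| ≤ κ = |A|`. Since `cf κ = ω`,
`D` is a countable union of subfamilies `Dₙ` with `|Dₙ| < κ`, so each `⋃ Dₙ` has size `< κ` and
misses some point `aₙ`. The countable set `{aₙ | n ∈ ℕ}` then lies in no member of `D`.
-/

open Cardinal Set

/-- The least cardinality of a family of countably infinite subsets of `A` that is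
cofinal in `([A]^{ℵ₀}, ⊆)`. -/
noncomputable def cofCountableSubsets (A : Type*) : Cardinal :=
  sInf { c | ∃ D : Set (Set A), (∀ s ∈ D, s.Countable ∧ s.Infinite) ∧
    (∀ t : Set A, t.Countable → t.Infinite → ∃ s ∈ D, t ⊆ s) ∧ #D = c }

universe u

theorem Order.exists_nat_isCofinal_range {α : Type*} [Preorder α] (h : Order.cof α = ℵ₀) :
    ∃ f : ℕ → α, IsCofinal (range f) := by
  obtain ⟨s, hs, hcard⟩ := Order.exists_cof_eq α
  have : Countable s := mk_le_aleph0_iff.mp (hcard.trans h).le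
  have : Nonempty s := by
    rw [← mk_ne_zero_iff, hcard, h]
    exact aleph0_ne_zero
  obtain ⟨f, hf⟩ := exists_surjective_nat s
  exact ⟨fun n ↦ f n, by rwa [range_comp', hf.range_eq, image_univ, Subtype.range_coe]⟩

theorem Cardinal.exists_nat_cover_mk_lt_of_cof_eq_aleph0 {X : Type*} {κ : Cardinal}
    (hX : #X ≤ κ) (hκ : κ.ord.cof = ℵ₀) :
    ∃ S : ℕ → Set X, (∀ x, ∃ n, x ∈ S n) ∧ ∀ n, #(S n) < κ := by
  have hκ_inf : ℵ₀ ≤ #κ.ord.ToType := by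
    simpa [← hκ] using Ordinal.cof_le_card κ.ord
  obtain ⟨f, hf⟩ :=
    Order.exists_nat_isCofinal_range (α := κ.ord.ToType) (by rw [Ordinal.cof_toType, hκ])
  obtain ⟨g⟩ : Nonempty (X ↪ κ.ord.ToType) := by rwa [← le_def, mk_ord_toType]
  refine ⟨fun n ↦ g ⁻¹' Iic (f n), fun x ↦ ?_, fun n ↦ ?_⟩
  · obtain ⟨_, ⟨n, rfl⟩, hn⟩ := hf (g x)
    exact ⟨n, hn⟩
  · calc #(g ⁻¹' Iic (f n)) ≤ #(Iic (f n)) := mk_preimage_of_injective _ _ g.injective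
      _ < #κ.ord.ToType := mk_Iic_lt _ (by rw [mk_ord_toType, Ordinal.type_toType]) hκ_inf
      _ = κ := mk_ord_toType κ

theorem Cardinal.mk_biUnion_lt_of_countable {ι α : Type u} {κ : Cardinal} (hκ : ℵ₀ < κ)
    {A : ι → Set α} (hA : ∀ i, (A i).Countable) {s : Set ι} (hs : #s < κ) :
    #(⋃ i ∈ s, A i) < κ :=
  (mk_biUnion_le A s).trans_lt <|
    mul_lt_of_lt hκ.le hs <| (ciSup_le' fun i : s ↦ (hA i).le_aleph0).trans_lt hκ

theorem Set.Countable.exists_superset_mem {A : Type*} [Infinite A] {t : Set A}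
    (ht : t.Countable) {D : Set (Set A)}
    (hD : ∀ t : Set A, t.Countable → t.Infinite → ∃ s ∈ D, t ⊆ s) : ∃ s ∈ D, t ⊆ s := by
  let e := _root_.Infinite.natEmbedding A
  obtain ⟨s, hs, hts⟩ := hD (t ∪ range e) (ht.union (countable_range e))
    ((infinite_range_of_injective e.injective).mono subset_union_right)
  exact ⟨s, hs, subset_union_left.trans hts⟩

theorem Cardinal.mk_lt_mk_of_forall_countable_subset {A : Type u} (hA : ℵ₀ < #A)
    (hcof : (#A).ord.cof = ℵ₀) {D : Set (Set A)} (hD : ∀ s ∈ D, s.Countable)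
    (hcover : ∀ t : Set A, t.Countable → ∃ s ∈ D, t ⊆ s) : #A < #D := by
  by_contra! hle
  obtain ⟨S, hS, hS_lt⟩ := exists_nat_cover_mk_lt_of_cof_eq_aleph0 hle hcof
  have hU_lt (n : ℕ) : #(⋃ s ∈ S n, (s : Set A)) < #A :=
    mk_biUnion_lt_of_countable hA (A := fun s : D ↦ (s : Set A)) (fun s ↦ hD s s.2) (hS_lt n)
  have hU_ne (n : ℕ) : ∃ a, a ∉ ⋃ s ∈ S n, (s : Set A) := by
    by_contra! h
    simpa [eq_univ_of_forall h] using hU_lt n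
  choose a ha using hU_ne
  obtain ⟨s, hsD, has⟩ := hcover (range a) (countable_range a)
  obtain ⟨n, hn⟩ := hS ⟨s, hsD⟩
  exact ha n (mem_biUnion hn (has ⟨n, rfl⟩))

theorem exists_mk_eq_cofCountableSubsets (A : Type*) :
    ∃ D : Set (Set A), (∀ s ∈ D, s.Countable ∧ s.Infinite) ∧
      (∀ t : Set A, t.Countable → t.Infinite → ∃ s ∈ D, t ⊆ s) ∧ #D = cofCountableSubsets A :=
  csInf_mem (s := {c | ∃ D : Set (Set A), (∀ s ∈ D, s.Countable ∧ s.Infinite) ∧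
      (∀ t : Set A, t.Countable → t.Infinite → ∃ s ∈ D, t ⊆ s) ∧ #D = c})
    ⟨_, {s | s.Countable ∧ s.Infinite}, fun _ hs ↦ hs, fun t ht ht' ↦ ⟨t, ⟨ht, ht'⟩, subset_rfl⟩, rfl⟩

/-- If `κ` is an uncountable cardinal of cofinality `ω`, then `cf([κ]^{ℵ₀}, ⊆) > κ`. -/
theorem cof_countable_subsets_gt_of_cof_omega (κ : Cardinal) (h1 : ℵ₀ < κ)
    (h2 : κ.ord.cof = ℵ₀) (A : Type) (hA : #A = κ) :
    κ < cofCountableSubsets A := by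
  subst hA
  have : Infinite A := infinite_iff.mpr h1.le
  obtain ⟨D, hD, hcover, hD_card⟩ := exists_mk_eq_cofCountableSubsets A
  rw [← hD_card]
  exact mk_lt_mk_of_forall_countable_subset h1 h2 (fun s hs ↦ (hD s hs).1)
    fun _ ht ↦ ht.exists_superset_mem hcover
end

section
/- Let X be a completely metrizable space of weight ℵ_n for some natural number n ≥ 1. Then X can be partitioned into exactly ℵ_n Polish subspaces, and every partition (indeed every covering) of X by Polish subspaces has cardinality at least ℵ_n. -/
/-!
Lower bound: a cover by `κ` Polish, hence separable, subspaces yields a dense set of size `κ ℵ₀`,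
hence a basis of balls of that size, so `ℵ_n ≤ κ` as soon as `ℵ₀ < ℵ_n`.

Upper bound, by induction on `n`: a `Gδ` set `A` inside the closure of a set `D` of size `ℵ_(n+1)`
is cut along an enumeration of `D` of order type `ω_(n+1)`. The closures `C i` of the initial
segments increase and cover `closure D`, because countable sets of indices are bounded; the layers
`A ∩ C i \ ⋃ j < i, C j` are `Gδ`, since that union is either a countable union or closed. Each
layer lies in the closure of `ℵ_n` points, so the induction hypothesis applies to it; for `n = 0`,
a separable `Gδ` subset of a complete metric space is Polish.
-/

open Cardinal Set TopologicalSpace Topology Function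

/-- The weight of a topological space: the least cardinality of a basis. -/
noncomputable def tweight (X : Type*) [TopologicalSpace X] : Cardinal :=
  sInf { c | ∃ B : Set (Set X), IsTopologicalBasis B ∧ #B = c }

theorem IsGδ.polishSpace {α : Type*} [TopologicalSpace α] [PolishSpace α] {s : Set α}
    (hs : IsGδ s) : PolishSpace s := by
  obtain ⟨U, hUo, hUc, rfl⟩ := hs
  have : Countable U := hUc.to_subtype
  have : ∀ u : U, PolishSpace u := fun u => (hUo u u.2).polishSpace
  let f : ⋂₀ U → α × ((u : U) → (u : Set α)) := fun x => (x, fun u => ⟨x, x.2 u u.2⟩)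
  have hf : IsEmbedding f :=
    .of_comp (by fun_prop) continuous_fst IsEmbedding.subtypeVal
  have hrange : range f = {p | ∀ u, (p.2 u : α) = p.1} := by
    refine Subset.antisymm (range_subset_iff.2 fun x u => rfl) fun p hp => ?_
    refine ⟨⟨p.1, fun u hu => hp ⟨u, hu⟩ ▸ (p.2 ⟨u, hu⟩).2⟩, ?_⟩
    ext1
    · rfl
    · exact funext fun u => Subtype.ext (hp u).symm
  refine IsClosedEmbedding.polishSpace (f := f) ⟨hf, ?_⟩
  rw [hrange, ofPred_forall]
  exact isClosed_iInter fun u => isClosed_eq (by fun_prop) continuous_fst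

theorem IsGδ.polishSpace_of_isSeparable {X : Type*} [MetricSpace X] [CompleteSpace X] {s : Set X}
    (hs : IsGδ s) (hsep : IsSeparable s) : PolishSpace s := by
  have : SeparableSpace (closure s) := hsep.closure.separableSpace
  have : CompleteSpace (closure s) := isClosed_closure.completeSpace_coe
  let f : s → closure s := inclusion subset_closure
  have hf : IsEmbedding f := .of_comp (by fun_prop) continuous_subtype_val IsEmbedding.subtypeVal
  have hrange : range f = Subtype.val ⁻¹' s := range_inclusion _
  have : PolishSpace (range f) := hrange ▸ (hs.preimage continuous_subtype_val).polishSpace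
  exact hf.toHomeomorph.isClosedEmbedding.polishSpace

theorem exists_isTopologicalBasis_mk_eq_tweight (X : Type*) [TopologicalSpace X] :
    ∃ B : Set (Set X), IsTopologicalBasis B ∧ #B = tweight X :=
  csInf_mem (s := {c | ∃ B : Set (Set X), IsTopologicalBasis B ∧ #B = c})
    ⟨_, _, isTopologicalBasis_opens, rfl⟩

theorem tweight_le_mk_of_isTopologicalBasis {X : Type*} [TopologicalSpace X] {B : Set (Set X)}
    (hB : IsTopologicalBasis B) : tweight X ≤ #B :=
  csInf_le' ⟨B, hB, rfl⟩

theorem exists_dense_mk_le_tweight (X : Type*) [TopologicalSpace X] :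
    ∃ D : Set X, Dense D ∧ #D ≤ tweight X := by
  obtain ⟨B, hB, hBw⟩ := exists_isTopologicalBasis_mk_eq_tweight X
  let pt : {b ∈ B | b.Nonempty} → X := fun b => b.2.2.some
  have hdense : Dense (range pt) :=
    hB.dense_iff.2 fun b hb hne => ⟨pt ⟨b, hb, hne⟩, hne.some_mem, mem_range_self _⟩
  refine ⟨range pt, hdense, ?_⟩
  calc #(range pt) ≤ #{b ∈ B | b.Nonempty} := mk_range_le
    _ ≤ #B := mk_le_mk_of_subset (sep_subset _ _)
    _ = tweight X := hBw

theorem Dense.tweight_le_mk_mul_aleph0 {X : Type*} [PseudoMetricSpace X] {D : Set X}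
    (hD : Dense D) : tweight X ≤ #D * ℵ₀ := by
  let ball : D × ℕ → Set X := fun p => Metric.ball p.1 (1 / (p.2 + 1))
  have hB : IsTopologicalBasis (range ball) := by
    refine isTopologicalBasis_of_isOpen_of_nhds (forall_mem_range.2 fun _ => Metric.isOpen_ball)
      fun a u ha hu => ?_
    obtain ⟨ε, hε, hball⟩ := Metric.isOpen_iff.1 hu a ha
    obtain ⟨k, hk⟩ := exists_nat_one_div_lt (half_pos hε)
    obtain ⟨d, hd, hdD⟩ := Metric.dense_iff.1 hD a (1 / (k + 1)) (by positivity)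
    refine ⟨ball (⟨d, hdD⟩, k), mem_range_self _, Metric.mem_ball_comm.1 hd, ?_⟩
    refine (Metric.ball_subset_ball' ?_).trans hball
    show 1 / ((k : ℝ) + 1) + dist d a ≤ ε
    linarith [Metric.mem_ball.1 hd]
  calc tweight X ≤ #(range ball) := tweight_le_mk_of_isTopologicalBasis hB
    _ ≤ #(D × ℕ) := mk_range_le
    _ = #D * ℵ₀ := by simp

theorem tweight_le_mk_mul_aleph0_of_sUnion_eq_univ {X : Type*} [PseudoMetricSpace X]
    {F : Set (Set X)} (hF : ∀ Y ∈ F, IsSeparable Y) (hFU : ⋃₀ F = Set.univ) :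
    tweight X ≤ #F * ℵ₀ := by
  choose! E hEc hYE using hF
  have hdense : Dense (⋃ Y ∈ F, E Y) := fun x => by
    obtain ⟨Y, hY, hx⟩ := hFU ▸ mem_univ x
    exact closure_mono (subset_biUnion_of_mem hY) (hYE Y hY hx)
  calc tweight X ≤ #(⋃ Y ∈ F, E Y) * ℵ₀ := hdense.tweight_le_mk_mul_aleph0
    _ ≤ #F * ℵ₀ * ℵ₀ := by
      gcongr
      exact (mk_biUnion_le E F).trans
        (by gcongr; exact ciSup_le' fun Y => le_aleph0_iff_set_countable.2 (hEc Y Y.2))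
    _ = #F * ℵ₀ := by rw [mul_assoc, aleph0_mul_aleph0]

theorem Order.exists_forall_lt_of_mk_lt_cof {α : Type*} [LinearOrder α] {S : Set α}
    (hS : #S < Order.cof α) : ∃ j, ∀ s ∈ S, s < j := by
  by_contra! h
  exact (Order.cof_le h).not_gt hS

namespace Cardinal

theorem mk_Iic_le_aleph {o : Ordinal} (i : (ℵ_ (o + 1)).ord.ToType) : #(Iic i) ≤ ℵ_ o := by
  rw [← Order.lt_succ_iff, succ_aleph]
  simpa using mk_Iic_lt i (by simp) (by simp)

theorem exists_forall_lt_of_mk_le_aleph {o : Ordinal} {S : Set (ℵ_ (o + 1)).ord.ToType}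
    (hS : #S ≤ ℵ_ o) : ∃ j, ∀ s ∈ S, s < j := by
  refine Order.exists_forall_lt_of_mk_lt_cof (hS.trans_lt ?_)
  rw [Ordinal.cof_toType, (isRegular_aleph_add_one o).cof_ord]
  exact aleph_lt_aleph.2 (Order.lt_add_one_iff.2 le_rfl)

end Cardinal

section Layer

variable {X ι : Type*} [LinearOrder ι]

/-- The transfinite analogue of `disjointed`. -/
def layer (C : ι → Set X) (i : ι) : Set X := C i \ ⋃ j < i, C j

theorem pairwise_disjoint_layer (C : ι → Set X) : Pairwise (Disjoint on layer C) := by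
  suffices ∀ i j, i < j → Disjoint (layer C i) (layer C j) from
    fun i j hij => hij.lt_or_gt.elim (this i j) fun h => (this j i h).symm
  intro i j hij
  exact disjoint_left.2 fun x hi hj => hj.2 (mem_biUnion hij hi.1)

theorem iUnion_layer [WellFoundedLT ι] (C : ι → Set X) : ⋃ i, layer C i = ⋃ i, C i := by
  refine Subset.antisymm (iUnion_mono fun i => sdiff_subset) fun x hx => ?_
  obtain ⟨i, hi, hmin⟩ := wellFounded_lt.has_min {i | x ∈ C i} (mem_iUnion.1 hx)
  exact mem_iUnion.2 ⟨i, hi, fun h => by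
    obtain ⟨j, hj, hxj⟩ := mem_iUnion₂.1 h
    exact hmin j hxj hj⟩

theorem isClosed_biUnion_of_forall_countable_bddAbove [TopologicalSpace X] [SequentialSpace X]
    {C : ι → Set X} (hmono : Monotone C) (hC : ∀ i, IsClosed (C i)) {S : Set ι}
    (hS : ∀ T ⊆ S, T.Countable → ∃ j ∈ S, ∀ t ∈ T, t ≤ j) : IsClosed (⋃ i ∈ S, C i) := by
  refine IsSeqClosed.isClosed fun u x hu hux => ?_
  choose k hkS hk using fun m => mem_iUnion₂.1 (hu m)
  obtain ⟨j, hjS, hj⟩ := hS (range k) (range_subset_iff.2 hkS) (countable_range k)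
  have hxj : x ∈ C j := (hC j).mem_of_tendsto hux
    (Filter.Eventually.of_forall fun m => hmono (hj _ (mem_range_self m)) (hk m))
  exact mem_biUnion hjS hxj

theorem isGδ_layer [TopologicalSpace X] [SequentialSpace X] [PerfectlyNormalSpace X]
    {C : ι → Set X} (hmono : Monotone C) (hC : ∀ i, IsClosed (C i)) (i : ι) : IsGδ (layer C i) := by
  rw [layer, sdiff_eq]
  by_cases hcof : ∃ T ⊆ Iio i, T.Countable ∧ ∀ j ∈ Iio i, ∃ t ∈ T, j ≤ t
  · obtain ⟨T, hTi, hTc, hT⟩ := hcof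
    have hU : ⋃ j < i, C j = ⋃ t ∈ T, C t := by
      refine Subset.antisymm (iUnion₂_subset fun j hj => ?_) (biUnion_mono hTi fun _ _ => le_rfl)
      obtain ⟨t, ht, hjt⟩ := hT j hj
      exact (hmono hjt).trans (subset_biUnion_of_mem ht)
    rw [hU, compl_iUnion₂]
    exact (hC i).isGδ.inter (.biInter_of_isOpen hTc fun t _ => (hC t).isOpen_compl)
  · push Not at hcof
    have hU : IsClosed (⋃ j ∈ Iio i, C j) :=
      isClosed_biUnion_of_forall_countable_bddAbove hmono hC fun T hTi hTc => by
        obtain ⟨j, hj, hT⟩ := hcof T hTi hTc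
        exact ⟨j, hj, fun t ht => (hT t ht).le⟩
    exact (hC i).isGδ.inter hU.isOpen_compl.isGδ

end Layer

theorem Set.PairwiseDisjoint.iUnion_of_sUnion_eq {α ι : Type*} {L : ι → Set α}
    (hL : Pairwise (Disjoint on L)) {Q : ι → Set (Set α)} (hQ : ∀ i, (Q i).PairwiseDisjoint id)
    (hQL : ∀ i, ⋃₀ Q i = L i) : (⋃ i, Q i).PairwiseDisjoint id := by
  rintro p hp q hq hpq
  obtain ⟨i, hpi⟩ := mem_iUnion.1 hp
  obtain ⟨j, hqj⟩ := mem_iUnion.1 hq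
  rcases eq_or_ne i j with rfl | hij
  · exact hQ i hpi hqj hpq
  · exact (hL hij).mono (hQL i ▸ subset_sUnion_of_mem hpi) (hQL j ▸ subset_sUnion_of_mem hqj)

theorem exists_isGδ_layers_of_mk_le_aleph_add_one {X : Type*} [MetricSpace X] (o : Ordinal)
    {A D : Set X} (hA : IsGδ A) (hD : #D ≤ ℵ_ (o + 1)) (hAD : A ⊆ closure D) :
    ∃ L : (ℵ_ (o + 1)).ord.ToType → Set X, Pairwise (Disjoint on L) ∧ ⋃ i, L i = A ∧
      ∀ i, IsGδ (L i) ∧ ∃ E : Set X, #E ≤ ℵ_ o ∧ L i ⊆ closure E := by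
  obtain ⟨r⟩ : Nonempty (D ↪ (ℵ_ (o + 1)).ord.ToType) := by rwa [← le_def, mk_toType, card_ord]
  let E i := Subtype.val '' (r ⁻¹' Iic i)
  have hmono : Monotone fun i => closure (E i) := fun i j hij =>
    closure_mono (image_mono (preimage_mono (Iic_subset_Iic.2 hij)))
  have hAC : A ⊆ ⋃ i, closure (E i) := by
    have hclosed : IsClosed (⋃ i, closure (E i)) := by
      simpa using isClosed_biUnion_of_forall_countable_bddAbove hmono (fun _ => isClosed_closure)
        (S := Set.univ) fun T _ hT => by
          obtain ⟨j, hj⟩ := exists_forall_lt_of_mk_le_aleph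
            ((le_aleph0_iff_set_countable.2 hT).trans (aleph0_le_aleph o))
          exact ⟨j, mem_univ j, fun t ht => (hj t ht).le⟩
    refine hAD.trans (closure_minimal (fun x hx => ?_) hclosed)
    exact mem_iUnion.2 ⟨r ⟨x, hx⟩, subset_closure ⟨⟨x, hx⟩, le_refl (r ⟨x, hx⟩), rfl⟩⟩
  refine ⟨fun i => A ∩ layer (fun i => closure (E i)) i, ?_, ?_, fun i => ⟨?_, E i, ?_, ?_⟩⟩
  · exact (pairwise_disjoint_layer _).mono fun i j h => h.mono inter_subset_right inter_subset_right
  · rw [← inter_iUnion, iUnion_layer, inter_eq_left.2 hAC]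
  · exact hA.inter (isGδ_layer hmono (fun _ => isClosed_closure) i)
  · calc #(E i) ≤ #(r ⁻¹' Iic i) := mk_image_le
      _ ≤ #(Iic i) := mk_preimage_of_injective _ _ r.injective
      _ ≤ ℵ_ o := mk_Iic_le_aleph i
  · exact inter_subset_right.trans sdiff_subset

theorem exists_polishSpace_partition_of_mk_le_aleph {X : Type*} [MetricSpace X] [CompleteSpace X]
    (n : ℕ) {A D : Set X} (hA : IsGδ A) (hD : #D ≤ ℵ_ n) (hAD : A ⊆ closure D) :
    ∃ P : Set (Set X), P.PairwiseDisjoint id ∧ ⋃₀ P = A ∧ (∀ p ∈ P, PolishSpace p) ∧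
      #P ≤ ℵ_ n := by
  induction n generalizing A D with
  | zero =>
    have hDc : D.Countable := le_aleph0_iff_set_countable.1 (by simpa using hD)
    have : PolishSpace A := hA.polishSpace_of_isSeparable ⟨D, hDc, hAD⟩
    refine ⟨{A}, pairwiseDisjoint_singleton _ _, sUnion_singleton A, by simp [*], ?_⟩
    simp
  | succ n ih =>
    obtain ⟨L, hLd, hLA, hL⟩ :=
      exists_isGδ_layers_of_mk_le_aleph_add_one n hA (by simpa using hD) hAD
    choose hLG E hE hLE using hL
    choose Q hQd hQL hQP hQc using fun i => ih (hLG i) (hE i) (hLE i)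
    refine ⟨⋃ i, Q i, .iUnion_of_sUnion_eq hLd hQd hQL, ?_, fun p hp => ?_, ?_⟩
    · rw [sUnion_iUnion, iUnion_congr hQL, hLA]
    · obtain ⟨i, hpi⟩ := mem_iUnion.1 hp
      exact hQP i p hpi
    calc #(⋃ i, Q i) ≤ ℵ_ (n + 1 : ℕ) * ℵ_ (n + 1 : ℕ) := by
          refine (mk_iUnion_le Q).trans (mul_le_mul' (by simp) (ciSup_le' fun i => ?_))
          exact (hQc i).trans (aleph_le_aleph.2 (by simp))
      _ = ℵ_ (n + 1 : ℕ) := mul_eq_self (aleph0_le_aleph _)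

/-- A completely metrizable space of weight `ℵ_n` (`n ≥ 1`) can be partitioned into
exactly `ℵ_n` Polish subspaces, and every covering of it by Polish subspaces has
cardinality at least `ℵ_n`. -/
theorem partition_cover_aleph_n (n : ℕ) (hn : 1 ≤ n) (X : Type) [MetricSpace X]
    [CompleteSpace X] (hw : tweight X = Cardinal.aleph n) :
    (∃ P : Set (Set X), P.PairwiseDisjoint id ∧ ⋃₀ P = Set.univ ∧
      (∀ Y ∈ P, PolishSpace Y) ∧ #P = Cardinal.aleph n) ∧
    (∀ F : Set (Set X), (∀ Y ∈ F, PolishSpace Y) → ⋃₀ F = Set.univ →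
      Cardinal.aleph n ≤ #F) := by
  have hcover : ∀ F : Set (Set X), (∀ Y ∈ F, PolishSpace Y) → ⋃₀ F = Set.univ → ℵ_ n ≤ #F := by
    intro F hF hFU
    have hle : ℵ_ n ≤ #F * ℵ₀ := hw ▸ tweight_le_mk_mul_aleph0_of_sUnion_eq_univ
      (fun Y hY => have := hF Y hY; .of_subtype Y) hFU
    have hℵ₀ : ℵ₀ < ℵ_ n := aleph0_lt_aleph.2 (by exact_mod_cast hn)
    by_contra! hlt
    exact (mul_lt_of_lt (aleph0_le_aleph _) hlt hℵ₀).not_ge hle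
  obtain ⟨D, hD, hDw⟩ := exists_dense_mk_le_tweight X
  obtain ⟨P, hPd, hPU, hPP, hPc⟩ :=
    exists_polishSpace_partition_of_mk_le_aleph n .univ (hw ▸ hDw) (by simp [hD.closure_eq])
  exact ⟨⟨P, hPd, hPU, hPP, hPc.antisymm (hcover P hPP hPU)⟩, hcover⟩
end
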